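/- Let m, n ≥ k ≥ 1 and A ∈ ℝ^{m×n}. Suppose that for every r ∈ [k] and every square submatrix B of A of size r, whenever z¹ and z² are solutions of LCP(B, q^B) with q^B := −B·(B¹¹, 0, B¹³, 0, ...)ᵀ, one has Bz¹ = Bz². Then A is totally non-negative of order k (all minors of size ≤ k are nonnegative). -/
import Mathlib


open Matrix

/-- `x` is a solution of the Linear Complementarity Problem LCP(A,q). -/
def IsLCPSol {n : ℕ} (A : Matrix (Fin n) (Fin n) ℝ) (q x : Fin n → ℝ) : Prop :=
  (∀ i, 0 ≤ x i) ∧ (∀ i, 0 ≤ (A.mulVec x + q) i) ∧ x ⬝ᵥ (A.mulVec x + q) = 0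

/-- `A` is totally non-negative of order `k`: all minors of size at most `k` are `≥ 0`. -/
def TotallyNonnegOfOrder {m n : ℕ} (A : Matrix (Fin m) (Fin n) ℝ) (k : ℕ) : Prop :=
  ∀ r : ℕ, r ≤ k → ∀ (f : Fin r → Fin m) (g : Fin r → Fin n),
    StrictMono f → StrictMono g → 0 ≤ (A.submatrix f g).det

/-- `B^{1j}` : the determinant of `B` with its first row and `j`-th column deleted. -/
noncomputable def firstRowMinor {s : ℕ} (B : Matrix (Fin (s + 1)) (Fin (s + 1)) ℝ)
    (j : Fin (s + 1)) : ℝ :=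
  (B.submatrix Fin.succ j.succAbove).det

/-- The vector `(B¹¹, 0, B¹³, 0, …)`. -/
noncomputable def altEvenVec {s : ℕ} (B : Matrix (Fin (s + 1)) (Fin (s + 1)) ℝ) :
    Fin (s + 1) → ℝ :=
  fun j => if Even (j : ℕ) then firstRowMinor B j else 0


/-- Cofactor expansion: multiplying `B` by the signed first-row cofactor vector gives
`det B` in coordinate 0 and 0 elsewhere. -/
lemma mulVec_cofactor {s : ℕ} (B : Matrix (Fin (s+1)) (Fin (s+1)) ℝ) (i : Fin (s+1)) :
    B.mulVec (fun j => (-1)^(j:ℕ) * (B.submatrix Fin.succ j.succAbove).det) i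
      = (B.updateRow 0 (B i)).det := by
  rw [Matrix.det_succ_row_zero]
  simp only [Matrix.mulVec, dotProduct]
  congr 1
  ext j
  have : (B.updateRow 0 (B i)).submatrix Fin.succ j.succAbove
      = B.submatrix Fin.succ j.succAbove := by
    ext a b; simp [Matrix.updateRow_apply, Fin.succ_ne_zero]
  rw [this]
  simp [Matrix.updateRow_self]
  ring

lemma mulVec_cofactor' {s : ℕ} (B : Matrix (Fin (s+1)) (Fin (s+1)) ℝ) (i : Fin (s+1)) :
    B.mulVec (fun j => (-1)^(j:ℕ) * (B.submatrix Fin.succ j.succAbove).det) i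
      = if i = 0 then B.det else 0 := by
  rw [mulVec_cofactor]
  split_ifs with h0
  · subst h0; rw [Matrix.updateRow_eq_self]
  · exact Matrix.det_zero_of_row_eq h0 (by simp [Matrix.updateRow_apply, h0])


/-- If for every square submatrix `B` of `A` of size `r ∈ [k]`, any two solutions `z¹, z²` of
`LCP(B, q^B)` with `q^B = -B·(B¹¹,0,B¹³,0,…)` satisfy `B z¹ = B z²`, then `A` is totally
non-negative of order `k`. -/
theorem stmt9 {m n k : ℕ} (hk : 1 ≤ k) (hm : k ≤ m) (hn : k ≤ n)
    (A : Matrix (Fin m) (Fin n) ℝ)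
    (h : ∀ s : ℕ, s + 1 ≤ k → ∀ (f : Fin (s + 1) → Fin m) (g : Fin (s + 1) → Fin n),
      StrictMono f → StrictMono g →
      ∀ z1 z2 : Fin (s + 1) → ℝ,
        IsLCPSol (A.submatrix f g)
          (-(A.submatrix f g).mulVec (altEvenVec (A.submatrix f g))) z1 →
        IsLCPSol (A.submatrix f g)
          (-(A.submatrix f g).mulVec (altEvenVec (A.submatrix f g))) z2 →
        (A.submatrix f g).mulVec z1 = (A.submatrix f g).mulVec z2) :
    TotallyNonnegOfOrder A k := by
  intro r
  induction r using Nat.strong_induction_on with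
  | _ r IH =>
  intro hrk f g hf hg
  match r, IH, f, g, hf, hg with
  | 0, _, f, g, _, _ => simp [Matrix.det_fin_zero]
  | s+1, IH, f, g, hf, hg =>
  set B := A.submatrix f g with hB
  -- all first-row minors of B are nonneg, by induction
  have hmin : ∀ j : Fin (s+1), 0 ≤ firstRowMinor B j := by
    intro j
    have : B.submatrix Fin.succ j.succAbove
        = A.submatrix (f ∘ Fin.succ) (g ∘ j.succAbove) := rfl
    rw [firstRowMinor, this]
    exact IH s (Nat.lt_succ_self s) (le_of_lt (lt_of_lt_of_le (Nat.lt_succ_self s) hrk))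
      _ _ (hf.comp Fin.strictMono_succ) (hg.comp (Fin.strictMono_succAbove j))
  by_contra hneg
  push_neg at hneg
  set x := altEvenVec B with hx
  set y : Fin (s+1) → ℝ := fun j => if Even (j:ℕ) then 0 else firstRowMinor B j with hy
  set c : Fin (s+1) → ℝ :=
    fun j => (-1)^(j:ℕ) * (B.submatrix Fin.succ j.succAbove).det with hc
  have hxyc : x - y = c := by
    funext j
    simp only [hx, hy, hc, altEvenVec, Pi.sub_apply, firstRowMinor]
    by_cases hev : Even (j:ℕ)
    · simp [hev, hev.neg_one_pow]
    · simp only [if_neg hev]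
      rw [(Nat.not_even_iff_odd.mp hev).neg_one_pow]
      ring
  have hBc : ∀ i, B.mulVec c i = if i = 0 then B.det else 0 := fun i => mulVec_cofactor' B i
  -- x is a solution
  have hsolx : IsLCPSol B (-(B.mulVec x)) x := by
    refine ⟨?_, ?_, ?_⟩
    · intro i
      simp only [hx, altEvenVec]
      split_ifs with hev
      · exact hmin i
      · exact le_refl 0
    · intro i; simp
    · simp
  -- y is a solution
  have hByx : ∀ i, (B.mulVec y + -(B.mulVec x)) i = if i = 0 then -B.det else 0 := by
    intro i
    have : (B.mulVec y + -(B.mulVec x)) i = -(B.mulVec (x - y) i) := by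
      simp [Matrix.mulVec_sub]; ring
    rw [this, hxyc, hBc]
    split_ifs <;> simp
  have hsoly : IsLCPSol B (-(B.mulVec x)) y := by
    refine ⟨?_, ?_, ?_⟩
    · intro i
      simp only [hy]
      split_ifs with hev
      · exact le_refl 0
      · exact hmin i
    · intro i
      rw [hByx]
      split_ifs
      · linarith
      · exact le_refl 0
    · rw [dotProduct]
      apply Finset.sum_eq_zero
      intro i _
      rw [hByx]
      by_cases h0 : i = 0
      · subst h0
        have : y 0 = 0 := by simp [hy]
        simp [this]
      · simp [h0]
  -- apply the hypothesis
  have := h s hrk f g hf hg x y hsolx hsoly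
  have hc0 : B.mulVec c = 0 := by
    have hxy : B.mulVec x = B.mulVec y := this
    rw [← hxyc, Matrix.mulVec_sub, hxy, sub_self]
  have : B.det = 0 := by
    have := congrFun hc0 0
    rw [hBc] at this
    simpa using this
  linarith
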